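/- Let B = {|φ_k⟩ : 1 ≤ k ≤ m} be (not necessarily orthogonal) product unit vectors with no product vector in B^⊥, and suppose there is a probability vector p with μ₀ = Σ p_k μ_k satisfying Tr(μ₀²) = Tr(μ_rμ₀) for all r (Condition 2). Let λ_max be the largest eigenvalue of μ₀, b = 1/λ_max, ρ₀ = (1/(N−b))(I − bμ₀), ελ_max = inf{Tr(μ₀σ) : σ separable} > 0, and assume Condition 3: ελ_max > (λ_max − Tr(μ₀²))/(Nλ_max − 1), together with εNλ_max < 1. Define s₀ = (1 − εNλ_max)(Nλ_max − 1)/(N·Tr(μ₀²) − 1). Then 0 < s₀ < 1, τ₀ = (1−s₀)D₀ + s₀ρ₀ satisfies Tr(μ₀τ₀) = ελ_max, and W₀ = τ₀ + c₀I − ρ₀ with c₀ = Tr(τ₀(ρ₀−τ₀)) is an entanglement witness for ρ₀; in particular ρ₀ is inseparable. -/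

import Mathlib

open Matrix
open scoped ComplexOrder

/-- The rank-one projection `|φ⟩⟨φ|`. -/
def outer {n : Type*} [Fintype n] (φ : n → ℂ) : Matrix n n ℂ :=
  Matrix.vecMulVec φ (star φ)

/-- The set of separable densities on `ℂ^{d₁} ⊗ ℂ^{d₂}`. -/
def SepSet (d₁ d₂ : ℕ) : Set (Matrix (Fin d₁ × Fin d₂) (Fin d₁ × Fin d₂) ℂ) :=
  convexHull ℝ {M | ∃ (a : Fin d₁ → ℂ) (b : Fin d₂ → ℂ),
    star a ⬝ᵥ a = 1 ∧ star b ⬝ᵥ b = 1 ∧ M = outer (fun p => a p.1 * b p.2)}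

/-!
Since `μ₀` is a density matrix with spectrum in `[0, λ_max]`, `ρ₀ = (λ_max I - μ₀)/(Nλ_max - 1)`
is a density matrix, and `D₀ - ρ₀`, hence also `τ₀ - ρ₀ = (1 - s₀)(D₀ - ρ₀)`, is a positive
multiple of `Nμ₀ - I`. For every density `σ` one has `Tr(W₀σ) = Tr((τ₀ - ρ₀)(σ - τ₀))`, which is
therefore a positive multiple of `Tr(μ₀σ) - Tr(μ₀τ₀) = Tr(μ₀σ) - ελ_max`. This is nonnegative on
separable states by the definition of `ε`, and negative at `ρ₀` because
`Tr(μ₀ρ₀) = (λ_max - Tr μ₀²)/(Nλ_max - 1)`, which is Condition 3.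
The inequality `N Tr μ₀² > 1` needed for `0 < s₀ < 1` is Cauchy–Schwarz, `Tr((μ₀ - D₀)²) ≥ 0`;
in the equality case `μ₀ = D₀` every separable state would give `Tr(μ₀σ) = 1/N`, contradicting
`εNλ_max < 1`.
-/

def IsDensity {n : Type*} [Fintype n] (ρ : Matrix n n ℂ) : Prop :=
  ρ.PosSemidef ∧ ρ.trace = 1

def IsEntanglementWitness {n : Type*} [Fintype n] (W ρ : Matrix n n ℂ)
    (S : Set (Matrix n n ℂ)) : Prop :=
  (W * ρ).trace.re < 0 ∧ ∀ σ ∈ S, 0 ≤ (W * σ).trace.re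

section Density

variable {n : Type*} [Fintype n]

lemma IsEntanglementWitness.notMem {W ρ : Matrix n n ℂ} {S : Set (Matrix n n ℂ)}
    (hW : IsEntanglementWitness W ρ S) : ρ ∉ S :=
  fun hρ => (hW.2 ρ hρ).not_gt hW.1

lemma outer_posSemidef (φ : n → ℂ) : (outer φ).PosSemidef := by
  rw [outer, vecMulVec_eq Unit, ← conjTranspose_replicateCol]
  exact posSemidef_self_mul_conjTranspose _

lemma trace_outer (φ : n → ℂ) : (outer φ).trace = star φ ⬝ᵥ φ := by
  simp [outer, trace, vecMulVec_apply, dotProduct, mul_comm]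

lemma isDensity_outer {φ : n → ℂ} (hφ : star φ ⬝ᵥ φ = 1) : IsDensity (outer φ) :=
  ⟨outer_posSemidef φ, (trace_outer φ).trans hφ⟩

lemma isDensity_sum_smul_outer {ι : Type*} [Fintype ι] {p : ι → ℝ} (hp : ∀ k, 0 ≤ p k)
    (hpsum : ∑ k, p k = 1) {φ : ι → n → ℂ} (hφ : ∀ k, star (φ k) ⬝ᵥ φ k = 1) :
    IsDensity (∑ k, (p k : ℂ) • outer (φ k)) := by
  refine ⟨posSemidef_sum _ fun k _ => (outer_posSemidef _).smul (Complex.zero_le_real.2 (hp k)),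
    ?_⟩
  simp [trace_sum, trace_outer, hφ, ← Complex.ofReal_sum, hpsum]

lemma convex_setOf_isDensity : Convex ℝ {ρ : Matrix n n ℂ | IsDensity ρ} := by
  rintro x ⟨hx, hxt⟩ y ⟨hy, hyt⟩ a b ha hb hab
  refine ⟨(hx.smul ha).add (hy.smul hb), ?_⟩
  simp [hxt, hyt, ← Complex.ofReal_add, hab]

lemma IsDensity.one_sub_smul_add_smul {ρ σ : Matrix n n ℂ} (hρ : IsDensity ρ) (hσ : IsDensity σ)
    {s : ℝ} (hs₀ : 0 ≤ s) (hs₁ : s ≤ 1) : IsDensity (((1 : ℂ) - s) • ρ + (s : ℂ) • σ) := by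
  have := convex_setOf_isDensity hρ hσ (sub_nonneg.2 hs₁) hs₀ (sub_add_cancel 1 s)
  simpa [← Complex.coe_smul] using this

lemma nonempty_of_isDensity {ρ : Matrix n n ℂ} (hρ : IsDensity ρ) : Nonempty n := by
  by_contra h
  simpa [not_nonempty_iff.1 h, trace] using hρ.2

lemma isDensity_inv_card_smul_one [DecidableEq n] [Nonempty n] :
    IsDensity (((Fintype.card n : ℂ))⁻¹ • (1 : Matrix n n ℂ)) :=
  ⟨PosSemidef.one.smul (by positivity), by simp⟩

lemma Matrix.PosSemidef.trace_mul_nonneg {A B : Matrix n n ℂ} (hA : A.PosSemidef)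
    (hB : B.PosSemidef) : 0 ≤ (A * B).trace := by
  classical
  open MatrixOrder in
  obtain ⟨C, rfl⟩ := CStarAlgebra.nonneg_iff_eq_star_mul_self.mp hB.nonneg
  rw [← mul_assoc, trace_mul_comm, ← mul_assoc]
  exact (hA.mul_mul_conjTranspose_same C).trace_nonneg

lemma trace_mul_self_eq_ofReal_re {μ : Matrix n n ℂ} (hμ : μ.IsHermitian) :
    (μ * μ).trace = ((μ * μ).trace.re : ℂ) := by
  refine Complex.eq_re_of_ofReal_le (r := 0) ?_
  simpa [hμ.eq] using (posSemidef_conjTranspose_mul_self μ).trace_nonneg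

end Density

section Spectrum

variable {n : Type*} [Fintype n] [DecidableEq n] {μ : Matrix n n ℂ}

lemma posSemidef_smul_one_sub_of_eigenvalue_le (hμ : μ.IsHermitian) {L : ℝ}
    (hL : ∀ (c : ℝ) (v : n → ℂ), v ≠ 0 → μ *ᵥ v = (c : ℂ) • v → c ≤ L) :
    ((L : ℂ) • 1 - μ).PosSemidef := by
  open MatrixOrder in
  have : μ ≤ algebraMap ℝ _ L := by
    refine le_algebraMap_of_spectrum_le fun x hx => ?_
    obtain ⟨i, rfl⟩ := hμ.spectrum_real_eq_range_eigenvalues ▸ hx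
    refine hL _ (hμ.eigenvectorBasis i)
      (fun h => hμ.eigenvectorBasis.orthonormal.ne_zero i ?_) ?_
    · ext j
      exact congrFun h j
    · rw [hμ.mulVec_eigenvectorBasis]
      ext j
      simp [Complex.real_smul]
  rwa [Matrix.le_iff, Algebra.algebraMap_eq_smul_one, ← Complex.coe_smul] at this

lemma re_trace_mul_self_le (hμ : IsDensity μ) {L : ℝ} (hL : ((L : ℂ) • 1 - μ).PosSemidef) :
    (μ * μ).trace.re ≤ L := by
  simpa [mul_sub, hμ.2] using (Complex.le_def.1 (hμ.1.trace_mul_nonneg hL)).1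

lemma one_lt_card_mul_re_trace_mul_self (hμ : IsDensity μ)
    (hne : μ ≠ ((Fintype.card n : ℂ))⁻¹ • 1) : 1 < Fintype.card n * (μ * μ).trace.re := by
  have := nonempty_of_isDensity hμ
  set c : ℂ := (Fintype.card n : ℂ)⁻¹
  have hc : c * Fintype.card n = 1 := inv_mul_cancel₀ (by simp)
  have hsq : ((μ - c • 1)ᴴ * (μ - c • 1)).trace = (μ * μ).trace - c := by
    have : (μ - c • 1)ᴴ = μ - c • 1 := by simp [c, hμ.1.1.eq]
    simp only [this, sub_mul, mul_sub, smul_mul_assoc, mul_smul_comm, trace_sub, trace_smul,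
      mul_one, one_mul, trace_one, hμ.2, smul_eq_mul]
    linear_combination c * hc
  have hpos : 0 < ((μ - c • 1)ᴴ * (μ - c • 1)).trace :=
    (posSemidef_conjTranspose_mul_self _).trace_nonneg.lt_of_ne' fun h =>
      hne (sub_eq_zero.1 (trace_conjTranspose_mul_self_eq_zero_iff.1 h))
  rw [hsq, trace_mul_self_eq_ofReal_re hμ.1.1, sub_pos,
    show c = ((Fintype.card n : ℝ)⁻¹ : ℝ) by simp [c], Complex.real_lt_real] at hpos
  rwa [inv_lt_iff_one_lt_mul₀' (by positivity)] at hpos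

end Spectrum

section Separable

variable {d₁ d₂ : ℕ}

lemma isDensity_of_mem_sepSet {σ : Matrix (Fin d₁ × Fin d₂) (Fin d₁ × Fin d₂) ℂ}
    (hσ : σ ∈ SepSet d₁ d₂) : IsDensity σ := by
  refine convexHull_min ?_ convex_setOf_isDensity hσ
  rintro _ ⟨a, b, ha, hb, rfl⟩
  refine isDensity_outer ?_
  have : (star fun p : Fin d₁ × Fin d₂ => a p.1 * b p.2) ⬝ᵥ (fun p => a p.1 * b p.2)
      = (star a ⬝ᵥ a) * (star b ⬝ᵥ b) := by
    simp only [dotProduct, Pi.star_apply, star_mul', Fintype.sum_prod_type, Finset.sum_mul_sum]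
    exact Finset.sum_congr rfl fun i _ => Finset.sum_congr rfl fun j _ => by ring
  rw [this, ha, hb, one_mul]

lemma sepSet_nonempty [Nonempty (Fin d₁ × Fin d₂)] : (SepSet d₁ d₂).Nonempty := by
  obtain ⟨i, j⟩ := ‹Nonempty (Fin d₁ × Fin d₂)›
  have hunit {d : ℕ} (k : Fin d) : star (Pi.single k (1 : ℂ)) ⬝ᵥ Pi.single k 1 = 1 := by
    simp [dotProduct, Pi.single_apply]
  exact ⟨_, subset_convexHull ℝ _ ⟨_, _, hunit i, hunit j, rfl⟩⟩

lemma sInf_le_re_trace_mul {μ σ : Matrix (Fin d₁ × Fin d₂) (Fin d₁ × Fin d₂) ℂ}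
    (hμ : μ.PosSemidef) (hσ : σ ∈ SepSet d₁ d₂) :
    sInf ((fun σ => (trace (μ * σ)).re) '' SepSet d₁ d₂) ≤ (trace (μ * σ)).re := by
  refine csInf_le ⟨0, ?_⟩ ⟨σ, hσ, rfl⟩
  rintro _ ⟨σ', hσ', rfl⟩
  exact (Complex.le_def.1 (hμ.trace_mul_nonneg (isDensity_of_mem_sepSet hσ').1)).1

lemma sInf_re_trace_smul_one_mul [Nonempty (Fin d₁ × Fin d₂)] (c : ℝ) :
    sInf ((fun σ => (trace (((c : ℂ) • 1) * σ)).re) '' SepSet d₁ d₂) = c := by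
  have : (fun σ => (trace (((c : ℂ) • 1) * σ)).re) '' SepSet d₁ d₂ = {c} := by
    refine sepSet_nonempty.image _ |>.subset_singleton_iff.1 ?_
    rintro _ ⟨σ, hσ, rfl⟩
    simp [(isDensity_of_mem_sepSet hσ).2]
  rw [this, csInf_singleton]

lemma one_lt_card_mul_re_trace_mul_self_of_sInf_mul_card_lt_one
    {μ : Matrix (Fin d₁ × Fin d₂) (Fin d₁ × Fin d₂) ℂ} (hμ : IsDensity μ)
    (h : sInf ((fun σ => (trace (μ * σ)).re) '' SepSet d₁ d₂) * Fintype.card (Fin d₁ × Fin d₂)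
      < 1) :
    1 < Fintype.card (Fin d₁ × Fin d₂) * (μ * μ).trace.re := by
  have := nonempty_of_isDensity hμ
  refine one_lt_card_mul_re_trace_mul_self hμ fun hμc => h.ne ?_
  rw [hμc, ← Complex.ofReal_natCast, ← Complex.ofReal_inv, sInf_re_trace_smul_one_mul]
  exact inv_mul_cancel₀ (Nat.cast_ne_zero.2 Fintype.card_ne_zero)

end Separable

lemma mixing_weight_pos_lt_one_and_mix_eq {N L T ε s : ℝ} (hN : 0 < N) (hNT : 1 < N * T)
    (hTL : T ≤ L) (hcond3 : (L - T) / (N * L - 1) < ε * L) (hεsmall : ε * N * L < 1)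
    (hs : s = (1 - ε * N * L) * (N * L - 1) / (N * T - 1)) :
    0 < s ∧ s < 1 ∧ (1 - s) * N⁻¹ + s * ((L - T) / (N * L - 1)) = ε * L := by
  have hNL : 0 < N * L - 1 := by nlinarith
  have hNT' : 0 < N * T - 1 := by linarith
  rw [div_lt_iff₀ hNL] at hcond3
  subst hs
  refine ⟨by apply div_pos <;> nlinarith, ?_, ?_⟩
  · rw [div_lt_one hNT']
    nlinarith
  · field_simp
    ring

section Witness

variable {n : Type*} [DecidableEq n] {μ ρ τ : Matrix n n ℂ}

lemma inv_sub_inv_smul_one_sub_smul (N : ℕ) {L : ℝ} (hL : L ≠ 0) :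
    ((N : ℂ) - ((L⁻¹ : ℝ) : ℂ))⁻¹ • (1 - ((L⁻¹ : ℝ) : ℂ) • μ)
      = (((N * L - 1)⁻¹ : ℝ) : ℂ) • ((L : ℂ) • 1 - μ) := by
  match_scalars <;> field_simp

lemma sub_eq_smul_of_eq_mix {N : ℕ} {L s : ℝ} (hN : N ≠ 0) (hNL : (N : ℝ) * L ≠ 1)
    (hρ : ρ = (((N * L - 1)⁻¹ : ℝ) : ℂ) • ((L : ℂ) • 1 - μ))
    (hτ : τ = ((1 : ℂ) - s) • ((N : ℂ)⁻¹ • 1) + (s : ℂ) • ρ) :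
    τ - ρ = (((1 - s) / (N * (N * L - 1)) : ℝ) : ℂ) • ((N : ℂ) • μ - 1) := by
  have : (N : ℂ) * L - 1 ≠ 0 := by norm_cast; exact sub_ne_zero.2 hNL
  subst hτ hρ
  match_scalars <;> field_simp <;> ring

variable [Fintype n]

lemma isDensity_smul_smul_one_sub (hμ : IsDensity μ) {N : ℕ} (hcard : Fintype.card n = N)
    {L : ℝ} (hL : ((L : ℂ) • 1 - μ).PosSemidef) (hNL : 1 < N * L) :
    IsDensity ((((N * L - 1)⁻¹ : ℝ) : ℂ) • ((L : ℂ) • 1 - μ)) := by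
  refine ⟨hL.smul (Complex.zero_le_real.2 (inv_nonneg.2 (by linarith))), ?_⟩
  have : (N : ℂ) * L - 1 ≠ 0 := by norm_cast; linarith
  rw [trace_smul, trace_sub, trace_smul, trace_one, hcard, hμ.2]
  push_cast
  rw [smul_eq_mul, smul_eq_mul, mul_comm (L : ℂ), inv_mul_cancel₀ this]

lemma re_trace_mul_smul_smul_one_sub (hμ : μ.trace = 1) (r L : ℝ) :
    (μ * ((r : ℂ) • ((L : ℂ) • 1 - μ))).trace.re = r * (L - (μ * μ).trace.re) := by
  simp [mul_sub, hμ]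

lemma re_trace_mul_mix (hμ : μ.trace = 1) {N : ℕ} {s : ℝ}
    (hτ : τ = ((1 : ℂ) - s) • ((N : ℂ)⁻¹ • 1) + (s : ℂ) • ρ) :
    (μ * τ).trace.re = (1 - s) * (N : ℝ)⁻¹ + s * (μ * ρ).trace.re := by
  subst hτ
  simp [mul_add, hμ]

lemma trace_witness_mul (τ ρ : Matrix n n ℂ) {σ : Matrix n n ℂ} (hσ : σ.trace = 1) :
    ((τ + (τ * (ρ - τ)).trace • 1 - ρ) * σ).trace = ((τ - ρ) * (σ - τ)).trace := by
  simp only [add_mul, sub_mul, mul_sub, smul_mul_assoc, one_mul, trace_add, trace_sub,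
    trace_smul, hσ, smul_eq_mul, mul_one, trace_mul_comm ρ τ]
  ring

lemma isEntanglementWitness_of_sub_eq_smul {S : Set (Matrix n n ℂ)}
    (hS : ∀ σ ∈ S, σ.trace = 1) {k : ℝ} {N : ℕ} (hk : 0 < k) (hN : 0 < N)
    (hτρ : τ - ρ = (k : ℂ) • ((N : ℂ) • μ - 1)) (hτ : τ.trace = 1) (hρ : ρ.trace = 1)
    (hρτ : (μ * ρ).trace.re < (μ * τ).trace.re)
    (hSτ : ∀ σ ∈ S, (μ * τ).trace.re ≤ (μ * σ).trace.re) :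
    IsEntanglementWitness (τ + (τ * (ρ - τ)).trace • 1 - ρ) ρ S := by
  have hW {σ : Matrix n n ℂ} (hσ : σ.trace = 1) :
      ((τ + (τ * (ρ - τ)).trace • 1 - ρ) * σ).trace.re
        = k * N * ((μ * σ).trace.re - (μ * τ).trace.re) := by
    have : ((τ - ρ) * (σ - τ)).trace = (k * N : ℂ) * ((μ * σ).trace - (μ * τ).trace) := by
      simp only [hτρ, smul_mul_assoc, sub_mul, mul_sub, one_mul, trace_sub, trace_smul, hσ, hτ,
        smul_eq_mul]
      ring
    rw [trace_witness_mul τ ρ hσ, this, ← Complex.ofReal_natCast, ← Complex.ofReal_mul,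
      Complex.re_ofReal_mul, Complex.sub_re]
  refine ⟨?_, fun σ hσ => ?_⟩
  · rw [hW hρ]
    exact mul_neg_of_pos_of_neg (by positivity) (sub_neg.2 hρτ)
  · rw [hW (hS σ hσ)]
    exact mul_nonneg (by positivity) (sub_nonneg.2 (hSτ σ hσ))

end Witness

theorem stmt17_general {d₁ d₂ m N : ℕ} (hN : N = d₁ * d₂)
    (φ : Fin m → Fin d₁ × Fin d₂ → ℂ)
    (hunit : ∀ k, star (φ k) ⬝ᵥ φ k = 1)
    (p : Fin m → ℝ) (hp : ∀ k, 0 ≤ p k) (hpsum : ∑ k, p k = 1)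
    (μ₀ D₀ : Matrix (Fin d₁ × Fin d₂) (Fin d₁ × Fin d₂) ℂ)
    (hμ₀ : μ₀ = ∑ k, (p k : ℂ) • outer (φ k))
    (hD₀ : D₀ = (N : ℂ)⁻¹ • 1)
    (lammax : ℝ)
    (hmax : ∀ (c : ℝ) (v : Fin d₁ × Fin d₂ → ℂ), v ≠ 0 →
      μ₀.mulVec v = (c : ℂ) • v → c ≤ lammax)
    (b : ℝ) (hb : b = lammax⁻¹)
    (ρ₀ : Matrix (Fin d₁ × Fin d₂) (Fin d₁ × Fin d₂) ℂ)
    (hρ₀ : ρ₀ = ((N : ℂ) - (b : ℂ))⁻¹ • (1 - (b : ℂ) • μ₀))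
    (ε : ℝ)
    (hε : ε * lammax = sInf ((fun σ => (Matrix.trace (μ₀ * σ)).re) '' SepSet d₁ d₂))
    (hcond3 : ε * lammax >
      (lammax - (Matrix.trace (μ₀ * μ₀)).re) / (N * lammax - 1))
    (hεsmall : ε * N * lammax < 1)
    (s₀ : ℝ)
    (hs₀ : s₀ = (1 - ε * N * lammax) * (N * lammax - 1) /
      (N * (Matrix.trace (μ₀ * μ₀)).re - 1))
    (τ₀ : Matrix (Fin d₁ × Fin d₂) (Fin d₁ × Fin d₂) ℂ)
    (hτ₀ : τ₀ = ((1 : ℂ) - (s₀ : ℂ)) • D₀ + (s₀ : ℂ) • ρ₀)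
    (c₀ : ℂ) (hc₀ : c₀ = Matrix.trace (τ₀ * (ρ₀ - τ₀)))
    (W₀ : Matrix (Fin d₁ × Fin d₂) (Fin d₁ × Fin d₂) ℂ)
    (hW₀ : W₀ = τ₀ + c₀ • 1 - ρ₀) :
    0 < s₀ ∧ s₀ < 1 ∧
    τ₀.PosSemidef ∧ τ₀.trace = 1 ∧
    (Matrix.trace (μ₀ * τ₀)).re = ε * lammax ∧
    (∀ σ ∈ SepSet d₁ d₂, 0 ≤ (Matrix.trace (W₀ * σ)).re) ∧
    (Matrix.trace (W₀ * ρ₀)).re < 0 ∧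
    ρ₀ ∉ SepSet d₁ d₂ := by
  subst hb hD₀
  have hμ : IsDensity μ₀ := hμ₀ ▸ isDensity_sum_smul_outer hp hpsum hunit
  have hcard : Fintype.card (Fin d₁ × Fin d₂) = N := by simp [hN]
  have := nonempty_of_isDensity hμ
  have hN0 : 0 < N := hcard ▸ Fintype.card_pos
  have hLμ := posSemidef_smul_one_sub_of_eigenvalue_le hμ.1.1 hmax
  have hNT : 1 < N * (μ₀ * μ₀).trace.re := hcard ▸
    one_lt_card_mul_re_trace_mul_self_of_sInf_mul_card_lt_one hμ
      (by rwa [← hε, hcard, mul_right_comm])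
  have hTL := re_trace_mul_self_le hμ hLμ
  have hNL : 1 < N * lammax := hNT.trans_le (by gcongr)
  have hL : 0 < lammax := pos_of_mul_pos_right (one_pos.trans hNL) (Nat.cast_nonneg N)
  obtain ⟨hs0, hs1, hmix⟩ := mixing_weight_pos_lt_one_and_mix_eq (by positivity) hNT hTL
    hcond3 hεsmall hs₀
  rw [inv_sub_inv_smul_one_sub_smul N hL.ne'] at hρ₀
  have hρ : IsDensity ρ₀ := hρ₀ ▸ isDensity_smul_smul_one_sub hμ hcard hLμ hNL
  have hτ : IsDensity τ₀ :=
    hτ₀ ▸ (hcard ▸ isDensity_inv_card_smul_one).one_sub_smul_add_smul hρ hs0.le hs1.le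
  have hμρ : (μ₀ * ρ₀).trace.re = (lammax - (μ₀ * μ₀).trace.re) / (N * lammax - 1) := by
    rw [hρ₀, re_trace_mul_smul_smul_one_sub hμ.2, inv_mul_eq_div]
  have hμτ : (μ₀ * τ₀).trace.re = ε * lammax := by rw [re_trace_mul_mix hμ.2 hτ₀, hμρ, hmix]
  have hW : IsEntanglementWitness W₀ ρ₀ (SepSet d₁ d₂) := hW₀ ▸ hc₀ ▸
    isEntanglementWitness_of_sub_eq_smul (fun σ hσ => (isDensity_of_mem_sepSet hσ).2)
      (div_pos (sub_pos.2 hs1) (by positivity)) hN0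
      (sub_eq_smul_of_eq_mix hN0.ne' hNL.ne' hρ₀ hτ₀) hτ.2 hρ.2 (hμτ ▸ hμρ ▸ hcond3)
      (fun σ hσ => hμτ ▸ hε ▸ sInf_le_re_trace_mul hμ.1 hσ)
  exact ⟨hs0, hs1, hτ.1, hτ.2, hμτ, hW.2, hW.1, hW.notMem⟩

/-- Non-orthogonal UPB construction: under Conditions 1 (`B^⊥` contains no nonzero product
vector), 2 (`Tr(μ₀²) = Tr(μ_r μ₀)` for all `r`), and 3
(`ελ_max > (λ_max - Tr(μ₀²))/(Nλ_max - 1)`), together with `εNλ_max < 1`, and with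
`b = 1/λ_max`, `ρ₀ = (1/(N-b))(I - bμ₀)`,
`s₀ = (1 - εNλ_max)(Nλ_max - 1)/(N Tr(μ₀²) - 1)`, `τ₀ = (1-s₀)D₀ + s₀ρ₀`,
`c₀ = Tr(τ₀(ρ₀-τ₀))`, `W₀ = τ₀ + c₀I - ρ₀`: one has `0 < s₀ < 1`, `τ₀` is a density,
`Tr(μ₀τ₀) = ελ_max`, and `W₀` is an entanglement witness for `ρ₀`, which is therefore
inseparable. -/
theorem stmt17 {d₁ d₂ m N : ℕ} (hN : N = d₁ * d₂) (hm0 : 0 < m)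
    (α : Fin m → Fin d₁ → ℂ) (β : Fin m → Fin d₂ → ℂ)
    (φ : Fin m → Fin d₁ × Fin d₂ → ℂ)
    (hprod : ∀ k, φ k = fun p => α k p.1 * β k p.2)
    (hunit : ∀ k, star (φ k) ⬝ᵥ φ k = 1)
    (hUPB : ∀ (a : Fin d₁ → ℂ) (b : Fin d₂ → ℂ),
      (∀ k, star (fun p : Fin d₁ × Fin d₂ => a p.1 * b p.2) ⬝ᵥ φ k = 0) →
      (fun p : Fin d₁ × Fin d₂ => a p.1 * b p.2) = 0)
    (p : Fin m → ℝ) (hp : ∀ k, 0 ≤ p k) (hpsum : ∑ k, p k = 1)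
    (μ₀ D₀ : Matrix (Fin d₁ × Fin d₂) (Fin d₁ × Fin d₂) ℂ)
    (hμ₀ : μ₀ = ∑ k, (p k : ℂ) • outer (φ k))
    (hD₀ : D₀ = (N : ℂ)⁻¹ • 1)
    (hcond2 : ∀ r, Matrix.trace (μ₀ * μ₀) = Matrix.trace (outer (φ r) * μ₀))
    (lammax : ℝ)
    (hev : ∃ v : Fin d₁ × Fin d₂ → ℂ, v ≠ 0 ∧ μ₀.mulVec v = (lammax : ℂ) • v)
    (hmax : ∀ (c : ℝ) (v : Fin d₁ × Fin d₂ → ℂ), v ≠ 0 →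
      μ₀.mulVec v = (c : ℂ) • v → c ≤ lammax)
    (b : ℝ) (hb : b = lammax⁻¹)
    (ρ₀ : Matrix (Fin d₁ × Fin d₂) (Fin d₁ × Fin d₂) ℂ)
    (hρ₀ : ρ₀ = ((N : ℂ) - (b : ℂ))⁻¹ • (1 - (b : ℂ) • μ₀))
    (ε : ℝ)
    (hε : ε * lammax = sInf ((fun σ => (Matrix.trace (μ₀ * σ)).re) '' SepSet d₁ d₂))
    (hεpos : 0 < ε * lammax)
    (hcond3 : ε * lammax >
      (lammax - (Matrix.trace (μ₀ * μ₀)).re) / (N * lammax - 1))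
    (hεsmall : ε * N * lammax < 1)
    (s₀ : ℝ)
    (hs₀ : s₀ = (1 - ε * N * lammax) * (N * lammax - 1) /
      (N * (Matrix.trace (μ₀ * μ₀)).re - 1))
    (τ₀ : Matrix (Fin d₁ × Fin d₂) (Fin d₁ × Fin d₂) ℂ)
    (hτ₀ : τ₀ = ((1 : ℂ) - (s₀ : ℂ)) • D₀ + (s₀ : ℂ) • ρ₀)
    (c₀ : ℂ) (hc₀ : c₀ = Matrix.trace (τ₀ * (ρ₀ - τ₀)))
    (W₀ : Matrix (Fin d₁ × Fin d₂) (Fin d₁ × Fin d₂) ℂ)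
    (hW₀ : W₀ = τ₀ + c₀ • 1 - ρ₀) :
    0 < s₀ ∧ s₀ < 1 ∧
    τ₀.PosSemidef ∧ τ₀.trace = 1 ∧
    (Matrix.trace (μ₀ * τ₀)).re = ε * lammax ∧
    (∀ σ ∈ SepSet d₁ d₂, 0 ≤ (Matrix.trace (W₀ * σ)).re) ∧
    (Matrix.trace (W₀ * ρ₀)).re < 0 ∧
    ρ₀ ∉ SepSet d₁ d₂ :=
  stmt17_general hN φ hunit p hp hpsum μ₀ D₀ hμ₀ hD₀ lammax hmax b hb ρ₀ hρ₀ ε hε hcond3 hεsmall s₀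
    hs₀ τ₀ hτ₀ c₀ hc₀ W₀ hW₀
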